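/- Fix s ≥ 1, P_s = {a_1,…,a_s, c | a_i < c}, with μ the Möbius function of the generalized subword order P_s^*. For 1 ≤ m < n: μ(c^m, c^n) − μ(c^{m−1}, c^{n−1}) = s·μ(c^m, c^{n−1}). -/

import Mathlib

/-- The alphabet `P_s = {a_1, …, a_s, c}` with `a_i < c`: `some i` is `a_i`, `none` is `c`. -/
abbrev Letter (s : ℕ) := Option (Fin s)

/-- The generalized subword order on words over `P_s`. -/
def WLE {s : ℕ} (u w : List (Letter s)) : Prop :=
  ∃ w', w'.Sublist w ∧ List.Forall₂ (fun x y => x = y ∨ y = none) u w'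

/-!
Fix `m`. An explicit function of `w`, defined by recursion on the first letter of `w`, satisfies
the defining relations of `μ(c^m, ·)`: its sum over the down-set `D(w)` is `1` if `w = c^m` and
`0` otherwise. This is checked by splitting down-sets along the first letter:
`D(c z) = {ε} ∪ P_s · D(z)` and `D(a z) = D(z) ∪ a · D(z)`, where the two parts of the latter
overlap in the words of `D(z)` beginning with `a`. By uniqueness of the Möbius function,
`μ(c^m, ·)` is this function, and the recurrence is its defining equation at `c · c^(n-1)`, as
`c^(n-1)` does not begin with an `a`-letter.
-/

open Finset

theorem List.SublistForall₂.of_cons {α β : Type*} {R : α → β → Prop} {a : α} {l₁ : List α}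
    {l₂ : List β} (h : SublistForall₂ R (a :: l₁) l₂) : SublistForall₂ R l₁ l₂ := by
  induction l₂ with
  | nil => cases h
  | cons b l₂ ih =>
    cases h with
    | cons _ h => exact h.cons_right
    | cons_right h => exact (ih h).cons_right

namespace WLE

variable {s : ℕ}

theorem iff_sublistForall₂ {u w : List (Letter s)} :
    WLE u w ↔ List.SublistForall₂ (fun x y => x = y ∨ y = none) u w := by
  rw [List.sublistForall₂_iff]
  exact exists_congr fun _ => and_comm

theorem nil (w : List (Letter s)) : WLE [] w :=
  iff_sublistForall₂.2 .nil

theorem refl (w : List (Letter s)) : WLE w w :=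
  ⟨w, .refl w, List.forall₂_same.2 fun _ _ => .inl rfl⟩

theorem length_le {u w : List (Letter s)} (h : WLE u w) : u.length ≤ w.length := by
  obtain ⟨w', hsub, hf⟩ := h
  exact hf.length_eq ▸ hsub.length_le

theorem of_cons {y : Letter s} {t w : List (Letter s)} (h : WLE (y :: t) w) : WLE t w :=
  iff_sublistForall₂.2 (iff_sublistForall₂.1 h).of_cons

theorem none_cons_iff {u z : List (Letter s)} :
    WLE u (none :: z) ↔ u = [] ∨ ∃ y t, u = y :: t ∧ WLE t z := by
  simp only [iff_sublistForall₂]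
  constructor
  · rintro (_ | ⟨-, h⟩ | h)
    · exact .inl rfl
    · exact .inr ⟨_, _, rfl, h⟩
    · rcases u with _ | ⟨y, t⟩
      · exact .inl rfl
      · exact .inr ⟨y, t, rfl, h.of_cons⟩
  · rintro (rfl | ⟨y, t, rfl, h⟩)
    · exact .nil
    · exact .cons (.inr rfl) h

theorem some_cons_iff {u z : List (Letter s)} {a : Fin s} :
    WLE u (some a :: z) ↔ WLE u z ∨ ∃ t, u = some a :: t ∧ WLE t z := by
  simp only [iff_sublistForall₂]
  constructor
  · rintro (_ | ⟨hy, h⟩ | h)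
    · exact .inl .nil
    · obtain rfl : _ = some a := hy.resolve_right (Option.some_ne_none a)
      exact .inr ⟨_, rfl, h⟩
    · exact .inl h
  · rintro (h | ⟨t, rfl, h⟩)
    · exact h.cons_right
    · exact .cons (.inl rfl) h

theorem replicate_none_of_le_count {m : ℕ} {w : List (Letter s)} (h : m ≤ w.count none) :
    WLE (List.replicate m none) w :=
  ⟨_, List.replicate_sublist_iff.2 h, List.forall₂_same.2 fun _ _ => .inl rfl⟩

def weight (w : List (Letter s)) : ℕ := w.length + w.count none

theorem eq_or_weight_lt {u w : List (Letter s)} (h : WLE u w) : u = w ∨ weight u < weight w := by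
  rw [iff_sublistForall₂] at h
  induction h with
  | @nil l => cases l <;> simp [weight]
  | @cons x y l₁ l₂ hxy _ ih =>
    rcases ih with rfl | ih
    · rcases hxy with rfl | rfl
      · exact .inl rfl
      · cases x <;> simp [weight]
    · right
      simp only [weight, List.length_cons, List.count_cons] at ih ⊢
      rcases hxy with rfl | rfl <;> split_ifs <;> simp_all <;> omega
  | @cons_right y l₁ l₂ _ ih =>
    right
    simp only [weight, List.length_cons, List.count_cons] at ih ⊢
    rcases ih with rfl | ih <;> omega

theorem finite_setOf (w : List (Letter s)) : {t | WLE t w}.Finite :=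
  (List.finite_length_le _ w.length).subset fun _ ht => length_le ht

noncomputable def downset (w : List (Letter s)) : Finset (List (Letter s)) :=
  (finite_setOf w).toFinset

@[simp] theorem mem_downset {t w : List (Letter s)} : t ∈ downset w ↔ WLE t w :=
  Set.Finite.mem_toFinset _

/-- `mobiusRowC s (m + 1) w` is the value of `μ(c^m, w)`; the extra row `mobiusRowC s 0` is
`-1` at the empty word and `0` elsewhere. The value at `c :: z` is chosen so that summing over all
first letters gives the previous row. -/
def mobiusRowC (s : ℕ) : ℕ → List (Letter s) → ℤ
  | 0, w => if w = [] then -1 else 0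
  | m + 1, [] => if m = 0 then 1 else 0
  | m + 1, some a :: z => if z.head? = some (some a) then 0 else -mobiusRowC s (m + 1) z
  | m + 1, none :: z =>
    mobiusRowC s m z - ∑ a : Fin s, if z.head? = some (some a) then 0 else -mobiusRowC s (m + 1) z

theorem mobiusRowC_some_cons (m : ℕ) (a : Fin s) (z : List (Letter s)) :
    mobiusRowC s (m + 1) (some a :: z) =
      if z.head? = some (some a) then 0 else -mobiusRowC s (m + 1) z := rfl

theorem mobiusRowC_none_cons (m : ℕ) (z : List (Letter s)) :
    mobiusRowC s (m + 1) (none :: z) =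
      mobiusRowC s m z - ∑ a : Fin s, mobiusRowC s (m + 1) (some a :: z) := rfl

theorem mobiusRowC_some_cons_eq_zero {m : ℕ} {z : List (Letter s)}
    (h : mobiusRowC s (m + 1) z = 0) (a : Fin s) : mobiusRowC s (m + 1) (some a :: z) = 0 := by
  rw [mobiusRowC_some_cons, h, neg_zero, ite_self]

theorem sum_mobiusRowC_cons (m : ℕ) (z : List (Letter s)) :
    ∑ x : Letter s, mobiusRowC s (m + 1) (x :: z) = mobiusRowC s m z := by
  rw [Fintype.sum_option, mobiusRowC_none_cons, sub_add_cancel]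

theorem mobiusRowC_eq_zero_of_count_lt {m : ℕ} {w : List (Letter s)} (h : w.count none < m) :
    mobiusRowC s (m + 1) w = 0 := by
  induction w generalizing m with
  | nil => exact if_neg (Nat.pos_iff_ne_zero.1 (by simpa using h))
  | cons x z ih =>
    cases x with
    | some a =>
      exact mobiusRowC_some_cons_eq_zero (ih (by simpa using h)) a
    | none =>
      simp only [List.count_cons_self] at h
      obtain ⟨m, rfl⟩ : ∃ k, m = k + 1 := ⟨m - 1, by omega⟩
      rw [mobiusRowC_none_cons, ih (by omega), zero_sub, neg_eq_zero]
      exact sum_eq_zero fun a _ => mobiusRowC_some_cons_eq_zero (ih (by omega)) a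

theorem mobiusRowC_replicate_self (m : ℕ) :
    mobiusRowC s (m + 1) (List.replicate m none) = 1 := by
  induction m with
  | zero => rfl
  | succ m ih =>
    have hvanish : mobiusRowC s (m + 2) (List.replicate m none) = 0 :=
      mobiusRowC_eq_zero_of_count_lt (by simp)
    rw [List.replicate_succ, mobiusRowC_none_cons, ih, sub_eq_self]
    exact sum_eq_zero fun a _ => mobiusRowC_some_cons_eq_zero hvanish a

theorem downset_nil : downset ([] : List (Letter s)) = {[]} := by
  ext t
  simp only [mem_downset, mem_singleton]
  exact ⟨fun h => List.eq_nil_of_length_eq_zero (Nat.le_zero.1 h.length_le), fun h => h ▸ nil _⟩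

theorem downset_none_cons (z : List (Letter s)) :
    downset (none :: z) = insert [] ((univ ×ˢ downset z).image fun p => p.1 :: p.2) := by
  ext t
  simp only [mem_downset, none_cons_iff, mem_insert, mem_image, mem_product,
    mem_univ, true_and, Prod.exists]
  aesop

theorem downset_some_cons (a : Fin s) (z : List (Letter s)) :
    downset (some a :: z) = downset z ∪ (downset z).image (List.cons (some a)) := by
  ext t
  simp only [mem_downset, some_cons_iff, mem_union, mem_image]
  aesop

theorem downset_inter_image_cons (a : Fin s) (z : List (Letter s)) :
    downset z ∩ (downset z).image (List.cons (some a)) =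
      (downset z).filter fun t => t.head? = some (some a) := by
  ext t
  simp only [mem_inter, mem_image, mem_filter, mem_downset]
  constructor
  · rintro ⟨ht, r, -, rfl⟩
    exact ⟨ht, rfl⟩
  · rintro ⟨ht, hhead⟩
    obtain ⟨r, rfl⟩ : ∃ r, t = some a :: r := by
      rcases t with _ | ⟨y, r⟩ <;> simp_all
    exact ⟨ht, r, of_cons ht, rfl⟩

theorem sum_downset_mobiusRowC_zero (w : List (Letter s)) :
    ∑ t ∈ downset w, mobiusRowC s 0 t = -1 := by
  rw [sum_eq_single_of_mem [] (mem_downset.2 (nil w))]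
  · rfl
  · intro t _ ht
    simp [mobiusRowC, ht]

theorem sum_downset_none_cons (m : ℕ) (z : List (Letter s)) :
    ∑ t ∈ downset (none :: z), mobiusRowC s (m + 1) t =
      mobiusRowC s (m + 1) [] + ∑ t ∈ downset z, mobiusRowC s m t := by
  rw [downset_none_cons, sum_insert (by simp),
    sum_image fun _ _ _ _ h => Prod.ext_iff.2 (List.cons_eq_cons.1 h), sum_product_right]
  simp only [sum_mobiusRowC_cons]

theorem sum_downset_some_cons (m : ℕ) (a : Fin s) (z : List (Letter s)) :
    ∑ t ∈ downset (some a :: z), mobiusRowC s (m + 1) t = 0 := by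
  have hunion := sum_union_inter (s₁ := downset z) (s₂ := (downset z).image (List.cons (some a)))
    (f := mobiusRowC s (m + 1))
  rw [← downset_some_cons, downset_inter_image_cons,
    sum_image fun _ _ _ _ h => (List.cons_eq_cons.1 h).2] at hunion
  have himage : ∑ t ∈ downset z, mobiusRowC s (m + 1) (some a :: t) =
      -∑ t ∈ downset z with ¬t.head? = some (some a), mobiusRowC s (m + 1) t := by
    simp only [mobiusRowC_some_cons]
    rw [sum_ite, sum_const_zero, zero_add, sum_neg_distrib]
  rw [himage, ← sum_filter_add_sum_filter_not (downset z) fun t => t.head? = some (some a)]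
    at hunion
  linarith

theorem sum_downset_mobiusRowC (m : ℕ) (w : List (Letter s)) :
    ∑ t ∈ downset w, mobiusRowC s (m + 1) t = if w = List.replicate m none then 1 else 0 := by
  induction w generalizing m with
  | nil => cases m <;> simp [downset_nil, mobiusRowC]
  | cons x z ih =>
    cases x with
    | some a => cases m <;> simp [sum_downset_some_cons, List.replicate_succ]
    | none =>
      rw [sum_downset_none_cons]
      cases m with
      | zero => rw [sum_downset_mobiusRowC_zero]; simp [mobiusRowC]
      | succ m => simp [ih, mobiusRowC, List.replicate_succ]

/-- The sums over intervals `[u, v]` in the defining relations of `μ(u, ·)` are taken over the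
down-set of `v` instead, which is the same since `f` vanishes off the up-set of `u`. -/
structure IsMobiusRow (u : List (Letter s)) (f : List (Letter s) → ℤ) : Prop where
  apply_self : f u = 1
  eq_zero_of_not_wle : ∀ v, ¬WLE u v → f v = 0
  sum_downset_eq_zero : ∀ v, WLE u v → u ≠ v → ∑ z ∈ downset v, f z = 0

theorem IsMobiusRow.of_finsum {u : List (Letter s)} {f : List (Letter s) → ℤ} (h₁ : f u = 1)
    (h₂ : ∀ v, ¬WLE u v → f v = 0)
    (h₃ : ∀ v, WLE u v → u ≠ v → ∑ᶠ z ∈ {z | WLE u z ∧ WLE z v}, f z = 0) :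
    IsMobiusRow u f where
  apply_self := h₁
  eq_zero_of_not_wle := h₂
  sum_downset_eq_zero v huv hne := by
    rw [← h₃ v huv hne, finsum_mem_eq_sum_of_inter_support_eq]
    ext z
    simp only [Set.mem_inter_iff, Set.mem_ofPred_eq, mem_coe, mem_downset, Function.mem_support]
    exact ⟨fun ⟨⟨_, hzv⟩, hz⟩ => ⟨hzv, hz⟩, fun ⟨hzv, hz⟩ => ⟨⟨not_not.1 (mt (h₂ z) hz), hzv⟩, hz⟩⟩

theorem IsMobiusRow.unique {u : List (Letter s)} {f g : List (Letter s) → ℤ}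
    (hf : IsMobiusRow u f) (hg : IsMobiusRow u g) : f = g := by
  funext v
  induction v using (measure weight).wf.induction with
  | h v ih =>
    by_cases huv : WLE u v
    swap
    · rw [hf.eq_zero_of_not_wle v huv, hg.eq_zero_of_not_wle v huv]
    obtain rfl | hne := eq_or_ne u v
    · rw [hf.apply_self, hg.apply_self]
    have hv : v ∈ downset v := mem_downset.2 (refl v)
    have hbelow : ∑ z ∈ (downset v).erase v, f z = ∑ z ∈ (downset v).erase v, g z := by
      refine sum_congr rfl fun z hz => ih z ?_
      obtain ⟨hzv, hz⟩ := mem_erase.1 hz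
      exact ((mem_downset.1 hz).eq_or_weight_lt).resolve_left hzv
    have hf0 := hf.sum_downset_eq_zero v huv hne
    have hg0 := hg.sum_downset_eq_zero v huv hne
    rw [← add_sum_erase _ _ hv] at hf0 hg0
    linarith

theorem isMobiusRow_mobiusRowC (m : ℕ) :
    IsMobiusRow (List.replicate m none) (mobiusRowC s (m + 1)) where
  apply_self := mobiusRowC_replicate_self m
  eq_zero_of_not_wle v hv :=
    mobiusRowC_eq_zero_of_count_lt (not_le.1 fun h => hv (replicate_none_of_le_count h))
  sum_downset_eq_zero v _ hne := by rw [sum_downset_mobiusRowC, if_neg hne.symm]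

theorem mobiusRowC_succ_replicate_succ (m k : ℕ) :
    mobiusRowC s (m + 1) (List.replicate (k + 1) none) =
      mobiusRowC s m (List.replicate k none) + s * mobiusRowC s (m + 1) (List.replicate k none) := by
  have hhead (a : Fin s) : (List.replicate k (none : Letter s)).head? ≠ some (some a) := by
    cases k <;> simp [List.replicate_succ]
  simp [List.replicate_succ, mobiusRowC_none_cons, mobiusRowC_some_cons, hhead]

end WLE

theorem mu_c_recurrence_general (s : ℕ)
    (μ : List (Letter s) → List (Letter s) → ℤ)
    (hrefl : ∀ u, μ u u = 1)
    (hnle : ∀ u v, ¬ WLE u v → μ u v = 0)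
    (hsum : ∀ u v, WLE u v → u ≠ v → ∑ᶠ z ∈ {z : List (Letter s) | WLE u z ∧ WLE z v}, μ u z = 0)
    (m n : ℕ) (hm : 1 ≤ m) (hmn : m < n) :
    μ (List.replicate m (none : Letter s)) (List.replicate n (none : Letter s)) -
      μ (List.replicate (m - 1) (none : Letter s)) (List.replicate (n - 1) (none : Letter s))
      = (s : ℤ) * μ (List.replicate m (none : Letter s)) (List.replicate (n - 1) (none : Letter s)) := by
  have hμ (k : ℕ) : μ (List.replicate k none) = WLE.mobiusRowC s (k + 1) :=
    (WLE.IsMobiusRow.of_finsum (hrefl _) (hnle _) (hsum _)).unique (WLE.isMobiusRow_mobiusRowC k)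
  obtain ⟨m, rfl⟩ : ∃ k, m = k + 1 := ⟨m - 1, by omega⟩
  obtain ⟨n, rfl⟩ : ∃ k, n = k + 1 := ⟨n - 1, by omega⟩
  simp only [Nat.add_sub_cancel, hμ, WLE.mobiusRowC_succ_replicate_succ]
  ring

/-- For `1 ≤ m < n`: `μ(c^m, c^n) − μ(c^{m−1}, c^{n−1}) = s·μ(c^m, c^{n−1})`. -/
theorem mu_c_recurrence (s : ℕ) (hs : 1 ≤ s)
    (μ : List (Letter s) → List (Letter s) → ℤ)
    (hrefl : ∀ u, μ u u = 1)
    (hnle : ∀ u v, ¬ WLE u v → μ u v = 0)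
    (hsum : ∀ u v, WLE u v → u ≠ v → ∑ᶠ z ∈ {z : List (Letter s) | WLE u z ∧ WLE z v}, μ u z = 0)
    (m n : ℕ) (hm : 1 ≤ m) (hmn : m < n) :
    μ (List.replicate m (none : Letter s)) (List.replicate n (none : Letter s)) -
      μ (List.replicate (m - 1) (none : Letter s)) (List.replicate (n - 1) (none : Letter s))
      = (s : ℤ) * μ (List.replicate m (none : Letter s)) (List.replicate (n - 1) (none : Letter s)) :=
  mu_c_recurrence_general s μ hrefl hnle hsum m n hm hmn
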